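/- Let (X, d) be a nonempty compact metric space and let (φ₁, …, φₙ) be an iterated function system on X with constants 0 < c₁ ≤ c₂ < 1 (so c₁·d(x,y) ≤ d(φᵢ(x), φᵢ(y)) ≤ c₂·d(x,y) for all i). Let E^∞ = {1, …, n}^ℕ be the space of infinite words over the alphabet {1, …, n} with the product topology, and let σᵢ : E^∞ → E^∞ be given by σᵢ(w₁, w₂, …) = (i, w₁, w₂, …). Define φ̃ᵢ : X × E^∞ → X × E^∞ by φ̃ᵢ(x, w) = (φᵢ(x), σᵢ(w)). Then there is a unique nonempty compact subset X̃ ⊆ X × E^∞ such that ⋃ᵢ₌₁ⁿ φ̃ᵢ(X̃) = X̃, and the sets φ̃₁(X̃), …, φ̃ₙ(X̃) are pairwise disjoint. -/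

import Mathlib

/-!
The invariant set is the graph of the coding map `π : E^∞ → X`, the continuous map with
`π (i·w) = φᵢ (π w)`, obtained as the fixed point of a contraction on `C(E^∞, X)`. Conversely,
on a compact invariant set `Y` the defect `dist y.1 (π y.2)` attains its maximum at some point
`φ̃ᵢ q` with `q ∈ Y`, whose defect is at most `c₂` times that of `q`; so the maximum is `0` and `Y`
lies in the graph. The projection of `Y` to `E^∞` is closed and stable under prepending letters,
hence meets every cylinder and is all of `E^∞`. Disjointness is read off the first letter.
-/

open Metric TopologicalSpace Set
open scoped NNReal

section Prepend

variable {ι : Type*}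

def prepend (i : ι) (w : ℕ → ι) : ℕ → ι
  | 0 => i
  | k + 1 => w k

@[simp] lemma prepend_zero (i : ι) (w : ℕ → ι) : prepend i w 0 = i := rfl

@[simp] lemma prepend_succ (i : ι) (w : ℕ → ι) (k : ℕ) : prepend i w (k + 1) = w k := rfl

lemma prepend_head_tail (w : ℕ → ι) : prepend (w 0) (fun k => w (k + 1)) = w := by
  funext k; cases k <;> rfl

lemma inter_cylinder_nonempty_of_prepend_mem {Z : Set (ℕ → ι)} (hne : Z.Nonempty)
    (hprep : ∀ i, ∀ z ∈ Z, prepend i z ∈ Z) (w : ℕ → ι) (k : ℕ) :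
    (Z ∩ PiNat.cylinder w k).Nonempty := by
  induction k generalizing w with
  | zero => simpa using hne
  | succ k ih =>
    obtain ⟨z, hz, hzw⟩ := ih fun k => w (k + 1)
    refine ⟨prepend (w 0) z, hprep _ _ hz, PiNat.mem_cylinder_iff.2 fun j hj => ?_⟩
    cases j with
    | zero => rfl
    | succ j => exact PiNat.mem_cylinder_iff.1 hzw j (by omega)

theorem eq_univ_of_prepend_mem [TopologicalSpace ι] [DiscreteTopology ι] {Z : Set (ℕ → ι)}
    (hZ : IsClosed Z) (hne : Z.Nonempty) (hprep : ∀ i, ∀ z ∈ Z, prepend i z ∈ Z) :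
    Z = univ := by
  refine eq_univ_of_forall fun w => hZ.closure_subset ?_
  rw [(PiNat.isTopologicalBasis_cylinders fun _ => ι).mem_closure_iff]
  rintro _ ⟨x, k, rfl⟩ hw
  rw [← PiNat.mem_cylinder_iff_eq.1 hw, inter_comm]
  exact inter_cylinder_nonempty_of_prepend_mem hne hprep w k

end Prepend

instance ContinuousMap.instNonempty {α β : Type*} [TopologicalSpace α] [TopologicalSpace β]
    [Nonempty β] : Nonempty C(α, β) :=
  ⟨.const α (Classical.arbitrary β)⟩

def codingOperator {X ι : Type*} [TopologicalSpace X] [TopologicalSpace ι] [DiscreteTopology ι]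
    {φ : ι → X → X} (hφ : ∀ i, Continuous (φ i)) (f : C(ℕ → ι, X)) : C(ℕ → ι, X) where
  toFun w := φ (w 0) (f fun k => w (k + 1))
  continuous_toFun := by
    have hφ' : Continuous fun p : ι × X => φ p.1 p.2 :=
      continuous_prod_of_discrete_left.2 hφ
    have hf : Continuous fun w : ℕ → ι => f fun k => w (k + 1) := by fun_prop
    exact hφ'.comp ((continuous_apply 0).prodMk hf)

section CodingMap

variable {X ι : Type*} [MetricSpace X] [TopologicalSpace ι] [DiscreteTopology ι] [Finite ι]
  {φ : ι → X → X} {K : ℝ≥0}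

lemma contractingWith_codingOperator (hK : K < 1) (hφ : ∀ i, LipschitzWith K (φ i)) :
    ContractingWith K (codingOperator fun i => (hφ i).continuous) := by
  refine ⟨hK, LipschitzWith.of_dist_le_mul fun f g => ?_⟩
  refine (ContinuousMap.dist_le (by positivity)).2 fun w => ?_
  calc dist (φ (w 0) (f _)) (φ (w 0) (g _)) ≤ K * dist (f _) (g _) := (hφ _).dist_le_mul _ _
    _ ≤ K * dist f g := by gcongr; exact ContinuousMap.dist_apply_le_dist _

variable [CompleteSpace X] [Nonempty X]

noncomputable def codingMap (hK : K < 1) (hφ : ∀ i, LipschitzWith K (φ i)) : C(ℕ → ι, X) :=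
  ContractingWith.fixedPoint _ (contractingWith_codingOperator hK hφ)

variable (hK : K < 1) (hφ : ∀ i, LipschitzWith K (φ i))

lemma codingMap_prepend (i : ι) (w : ℕ → ι) :
    codingMap hK hφ (prepend i w) = φ i (codingMap hK hφ w) :=
  (DFunLike.congr_fun (ContractingWith.fixedPoint_isFixedPt
    (contractingWith_codingOperator hK hφ)) (prepend i w)).symm

theorem fst_eq_codingMap_of_subset_iUnion_image {Y : Set (X × (ℕ → ι))} (hY : IsCompact Y)
    (hYsub : Y ⊆ ⋃ i, Prod.map (φ i) (prepend i) '' Y) {y : X × (ℕ → ι)} (hy : y ∈ Y) :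
    y.1 = codingMap hK hφ y.2 := by
  set defect : X × (ℕ → ι) → ℝ := fun p => dist p.1 (codingMap hK hφ p.2)
  have hdefect : Continuous defect := by fun_prop
  obtain ⟨m, hm, hmax⟩ := hY.exists_isMaxOn ⟨y, hy⟩ hdefect.continuousOn
  have hcontract : defect m ≤ K * defect m := by
    obtain ⟨i, q, hq, rfl⟩ := mem_iUnion.1 (hYsub hm)
    calc defect (Prod.map (φ i) (prepend i) q)
        = dist (φ i q.1) (φ i (codingMap hK hφ q.2)) := by simp [defect, codingMap_prepend]
      _ ≤ K * defect q := (hφ i).dist_le_mul _ _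
      _ ≤ K * defect (Prod.map (φ i) (prepend i) q) := by gcongr; exact hmax hq
  have hm0 : defect m ≤ 0 := by
    have : (K : ℝ) < 1 := hK
    nlinarith
  exact dist_le_zero.1 ((hmax hy).trans hm0)

theorem iUnion_image_range_codingMap :
    ⋃ i, Prod.map (φ i) (prepend i) '' range (fun w => (codingMap hK hφ w, w)) =
      range (fun w => (codingMap hK hφ w, w)) := by
  refine Subset.antisymm (iUnion_subset fun i => ?_) fun _ ⟨w, hw⟩ => mem_iUnion.2 ⟨w 0, ?_⟩
  · rintro _ ⟨_, ⟨w, rfl⟩, rfl⟩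
    exact ⟨prepend i w, by simp [codingMap_prepend]⟩
  · refine ⟨_, mem_range_self fun k => w (k + 1), ?_⟩
    simp only [← hw, Prod.map, ← codingMap_prepend, prepend_head_tail]

theorem eq_range_codingMap_of_iUnion_image_eq {Y : Set (X × (ℕ → ι))} (hY : IsCompact Y)
    (hne : Y.Nonempty) (hinv : ⋃ i, Prod.map (φ i) (prepend i) '' Y = Y) :
    Y = range (fun w => (codingMap hK hφ w, w)) := by
  have hgraph {y} (hy : y ∈ Y) : (codingMap hK hφ y.2, y.2) = y :=
    Prod.ext (fst_eq_codingMap_of_subset_iUnion_image hK hφ hY hinv.ge hy).symm rfl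
  have hsnd : Prod.snd '' Y = univ := by
    refine eq_univ_of_prepend_mem (hY.image continuous_snd).isClosed (hne.image _) ?_
    rintro i _ ⟨y, hy, rfl⟩
    exact ⟨_, hinv.le (mem_iUnion_of_mem i (mem_image_of_mem _ hy)), rfl⟩
  refine Subset.antisymm (fun y hy => ⟨y.2, hgraph hy⟩) ?_
  rintro _ ⟨w, rfl⟩
  obtain ⟨y, hy, rfl⟩ := hsnd.ge (mem_univ w)
  exact (hgraph hy).symm ▸ hy

end CodingMap

theorem disjoint_image_prodMap_prepend {α β ι : Type*} {f g : α → β} {i j : ι} (hij : i ≠ j)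
    (A B : Set (α × (ℕ → ι))) :
    Disjoint (Prod.map f (prepend i) '' A) (Prod.map g (prepend j) '' B) := by
  rw [disjoint_left]
  rintro _ ⟨p, -, rfl⟩ ⟨q, -, hq⟩
  exact hij (congrArg (fun r => r.2 0) hq).symm

theorem stmt2 {X : Type*} [MetricSpace X] [CompactSpace X] [Nonempty X]
    (n : ℕ) (hn : 1 ≤ n) (φ : Fin n → X → X) (c₁ c₂ : ℝ)
    (hc₂ : c₂ < 1)
    (hφ : ∀ i x y, c₁ * dist x y ≤ dist (φ i x) (φ i y) ∧
        dist (φ i x) (φ i y) ≤ c₂ * dist x y)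
    (σ : Fin n → (ℕ → Fin n) → (ℕ → Fin n))
    (hσ : ∀ i w, σ i w 0 = i ∧ ∀ k, σ i w (k + 1) = w k)
    (φt : Fin n → X × (ℕ → Fin n) → X × (ℕ → Fin n))
    (hφt : ∀ i p, φt i p = (φ i p.1, σ i p.2)) :
    ∃ Xt : NonemptyCompacts (X × (ℕ → Fin n)),
      ((⋃ i, φt i '' (Xt : Set (X × (ℕ → Fin n)))) = (Xt : Set (X × (ℕ → Fin n)))) ∧
      (∀ Y : NonemptyCompacts (X × (ℕ → Fin n)),
        (⋃ i, φt i '' (Y : Set (X × (ℕ → Fin n)))) = (Y : Set (X × (ℕ → Fin n))) → Y = Xt) ∧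
      Pairwise fun i j =>
        Disjoint (φt i '' (Xt : Set (X × (ℕ → Fin n)))) (φt j '' (Xt : Set (X × (ℕ → Fin n)))) := by
  have hσ_eq : σ = prepend := by
    funext i w k
    cases k with
    | zero => exact (hσ i w).1
    | succ k => exact (hσ i w).2 k
  have hφt_eq : φt = fun i => Prod.map (φ i) (prepend i) := by
    funext i p
    rw [hφt, hσ_eq]
    rfl
  subst hσ_eq hφt_eq
  have : Nonempty (Fin n) := ⟨⟨0, hn⟩⟩
  have hK : c₂.toNNReal < 1 := Real.toNNReal_lt_one.2 hc₂
  have hLip i : LipschitzWith c₂.toNNReal (φ i) :=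
    LipschitzWith.of_dist_le' fun x y => (hφ i x y).2
  have hcont : Continuous fun w => (codingMap hK hLip w, w) := by fun_prop
  refine ⟨⟨⟨_, isCompact_range hcont⟩, range_nonempty _⟩, iUnion_image_range_codingMap hK hLip,
    fun Y hY => ?_, fun i j hij => disjoint_image_prodMap_prepend hij _ _⟩
  exact NonemptyCompacts.ext
    (eq_range_codingMap_of_iUnion_image_eq hK hLip Y.isCompact Y.nonempty hY)
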